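/- In the lattice Λ₂ (defined in the context), set D001 = 0, D010 = 2f₁, D011 = f₂ + e₁, D100 = f₂, D101 = l + f₁, D110 = l + f₁, D111 = f₂, and L100 = L010 = L110 = f₁ + f₂ + l, L001 = L101 = f₂ + l, L011 = 2f₁ + l, L111 = f₁ + f₂. Then L_χ ≠ 0 for each of the seven characters χ, the seven cover relations hold: 2·L100 = D100 + D101 + D110 + D111, 2·L010 = D010 + D011 + D110 + D111, 2·L001 = D001 + D011 + D101 + D111, 2·L110 = D010 + D011 + D100 + D101, 2·L101 = D001 + D011 + D100 + D110, 2·L011 = D001 + D010 + D101 + D110, 2·L111 = D001 + D010 + D100 + D111, and moreover 2·K + (D001 + D010 + D011 + D100 + D101 + D110 + D111) = f₁ + f₂ + l = 3l − e₁ − e₂. (These relations show the data define a ℤ₂³-cover X → Y₂ with 2K_X ≡ g*(f₁ + f₂ + l), used for the surface with canonical degree 14 and q = 0.) -/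
import Mathlib


/-- The Picard lattice of the blow-up of the projective plane at 2 points:
free abelian group with basis `l, e1, ..., e2`. -/
abbrev Lam : Type := Fin 3 → ℤ

namespace DelPezzoCover

def l : Lam := ![1, 0, 0]
def e1 : Lam := ![0, 1, 0]
def e2 : Lam := ![0, 0, 1]

/-- The canonical class `K = -3l + e1 + ... + e2`. -/
def K : Lam := (-3 : ℤ) • l + e1 + e2

def f1 : Lam := l - e1
def f2 : Lam := l - e2

def h12 : Lam := l - e1 - e2

def D001 : Lam := 0
def D010 : Lam := (2 : ℤ) • f1
def D011 : Lam := f2 + e1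
def D100 : Lam := f2
def D101 : Lam := l + f1
def D110 : Lam := l + f1
def D111 : Lam := f2

def L100 : Lam := f1 + f2 + l
def L010 : Lam := f1 + f2 + l
def L001 : Lam := f2 + l
def L110 : Lam := f1 + f2 + l
def L101 : Lam := f2 + l
def L011 : Lam := (2 : ℤ) • f1 + l
def L111 : Lam := f1 + f2

theorem cover_data_d14_q0 :
    L100 ≠ 0 ∧
    L010 ≠ 0 ∧
    L001 ≠ 0 ∧
    L110 ≠ 0 ∧
    L101 ≠ 0 ∧
    L011 ≠ 0 ∧
    L111 ≠ 0 ∧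
    (2 : ℤ) • L100 = D100 + D101 + D110 + D111 ∧
    (2 : ℤ) • L010 = D010 + D011 + D110 + D111 ∧
    (2 : ℤ) • L001 = D001 + D011 + D101 + D111 ∧
    (2 : ℤ) • L110 = D010 + D011 + D100 + D101 ∧
    (2 : ℤ) • L101 = D001 + D011 + D100 + D110 ∧
    (2 : ℤ) • L011 = D001 + D010 + D101 + D110 ∧
    (2 : ℤ) • L111 = D001 + D010 + D100 + D111 ∧
    (2 : ℤ) • K + (D001 + D010 + D011 + D100 + D101 + D110 + D111) = f1 + f2 + l ∧
    f1 + f2 + l = (3 : ℤ) • l - e1 - e2 := by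
  refine ⟨?_, ?_, ?_, ?_, ?_, ?_, ?_, ?_, ?_, ?_, ?_, ?_, ?_, ?_, ?_, ?_⟩ <;>
    first
    | (intro h; have := congrFun h 0;
       simp [L100, L010, L001, L110, L101, L011, L111, f1, f2, l, e1, e2] at this)
    | (funext i; fin_cases i <;>
       simp [K, D001, D010, D011, D100, D101, D110, D111, L100, L010, L001, L110,
         L101, L011, L111, f1, f2, h12, l, e1, e2])

end DelPezzoCover
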